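/- Let k ≥ 1, α ∈ (0,1), and let T be a nonzero nonnegative k×k real matrix each of whose columns is either identically zero or entrywise positive, and suppose that T_{v,w} ≥ α·T_{v′,w} for all row indices v, v′ and all column indices w. Then for every x ∈ C′, every entry of the normalized image T·x is at least α/√k, and consequently the Hilbert-metric diameter of T satisfies Δ(T) ≤ 2 log(√k/α). -/

import Mathlib

noncomputable section

/-- The set `C'` of vectors in `ℝ^k` of Euclidean norm 1 with all entries positive. -/
def posUnit (k : ℕ) : Set (Fin k → ℝ) :=
  {v | Real.sqrt (∑ i, v i ^ 2) = 1 ∧ ∀ i, 0 < v i}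

/-- The Hilbert projective metric on positive vectors:
`d_H(x,y) = log ((max_i x_i/y_i) · (max_i y_i/x_i))`. -/
def hilbertDist {k : ℕ} (x y : Fin k → ℝ) : ℝ :=
  Real.log ((⨆ i : Fin k, x i / y i) * (⨆ i : Fin k, y i / x i))

/-- The projective action of a matrix on `C'`: `T·v = Tv / ‖Tv‖`. -/
def matAct {k : ℕ} (T : Matrix (Fin k) (Fin k) ℝ) (v : Fin k → ℝ) : Fin k → ℝ :=
  (Real.sqrt (∑ i, (T.mulVec v i) ^ 2))⁻¹ • T.mulVec v

/-- if `T` is a nonzero nonnegative `k×k` matrix, with columns either zero or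
positive, satisfying `T a b ≥ α · T a' b` for all rows `a, a'` and columns `b`, then every entry
of `T·x` is at least `α/√k` for `x ∈ C'`, and the Hilbert diameter of `T` is at most
`2 log(√k/α)`. -/
theorem stmt1 {k : ℕ} (hk : 1 ≤ k) (α : ℝ) (hα : α ∈ Set.Ioo (0 : ℝ) 1)
    (T : Matrix (Fin k) (Fin k) ℝ)
    (hnn : ∀ a b, 0 ≤ T a b) (hnz : T ≠ 0)
    (hcol : ∀ b, (∀ a, T a b = 0) ∨ (∀ a, 0 < T a b))
    (hdom : ∀ a a' b, α * T a' b ≤ T a b) :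
    (∀ x ∈ posUnit k, ∀ a, α / Real.sqrt k ≤ matAct T x a) ∧
    (∀ x ∈ posUnit k, ∀ y ∈ posUnit k,
      hilbertDist (matAct T x) (matAct T y) ≤ 2 * Real.log (Real.sqrt k / α)) := by
  obtain ⟨hα0, hα1⟩ := hα
  haveI : Nonempty (Fin k) := Fin.pos_iff_nonempty.mp (by omega)
  have hk0 : (0:ℝ) < Real.sqrt k := Real.sqrt_pos.2 (by exact_mod_cast (by omega : 0 < k))
  -- there is a positive column
  have hcolpos : ∃ b, ∀ a, 0 < T a b := by
    by_contra h
    push_neg at h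
    apply hnz
    ext a b
    rcases hcol b with h0 | hp
    · exact h0 a
    · obtain ⟨a', ha'⟩ := h b
      exact absurd (hp a') (not_lt.mpr ha')
  obtain ⟨b0, hb0⟩ := hcolpos
  have hmul : ∀ x ∈ posUnit k, ∀ a, 0 < T.mulVec x a := by
    intro x hx a
    simp only [Matrix.mulVec, dotProduct]
    apply Finset.sum_pos'
    · intro b _; exact mul_nonneg (hnn a b) (hx.2 b).le
    · exact ⟨b0, Finset.mem_univ _, mul_pos (hb0 a) (hx.2 b0)⟩
  have hdomv : ∀ x ∈ posUnit k, ∀ a a', α * T.mulVec x a' ≤ T.mulVec x a := by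
    intro x hx a a'
    simp only [Matrix.mulVec, dotProduct, Finset.mul_sum]
    apply Finset.sum_le_sum
    intro b _
    rw [← mul_assoc]
    exact mul_le_mul_of_nonneg_right (hdom a a' b) (hx.2 b).le
  have hNpos : ∀ x ∈ posUnit k, 0 < Real.sqrt (∑ i, (T.mulVec x i)^2) := by
    intro x hx
    apply Real.sqrt_pos.2
    apply Finset.sum_pos (fun i _ => pow_pos (hmul x hx i) 2) Finset.univ_nonempty
  have hNle : ∀ x ∈ posUnit k, ∀ a,
      Real.sqrt (∑ i, (T.mulVec x i)^2) ≤ Real.sqrt k / α * T.mulVec x a := by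
    intro x hx a
    have h1 : ∀ i, T.mulVec x i ≤ T.mulVec x a / α := by
      intro i
      rw [le_div_iff₀ hα0, mul_comm]
      exact hdomv x hx a i
    have hda : 0 ≤ T.mulVec x a / α := div_nonneg (hmul x hx a).le hα0.le
    have h2 : (∑ i, (T.mulVec x i)^2) ≤ (k : ℝ) * (T.mulVec x a / α)^2 := by
      calc ∑ i, (T.mulVec x i)^2 ≤ ∑ _i : Fin k, (T.mulVec x a / α)^2 :=
            Finset.sum_le_sum (fun i _ => pow_le_pow_left₀ (hmul x hx i).le (h1 i) 2)
        _ = (k:ℝ) * (T.mulVec x a / α)^2 := by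
            simp [Finset.sum_const, nsmul_eq_mul]
    calc Real.sqrt (∑ i, (T.mulVec x i)^2) ≤ Real.sqrt ((k:ℝ) * (T.mulVec x a / α)^2) :=
          Real.sqrt_le_sqrt h2
      _ = Real.sqrt k * (T.mulVec x a / α) := by
          rw [Real.sqrt_mul (Nat.cast_nonneg k), Real.sqrt_sq hda]
      _ = Real.sqrt k / α * T.mulVec x a := by ring
  have hlow : ∀ x ∈ posUnit k, ∀ a, α / Real.sqrt k ≤ matAct T x a := by
    intro x hx a
    unfold matAct
    simp only [Pi.smul_apply, smul_eq_mul]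
    rw [inv_mul_eq_div, le_div_iff₀ (hNpos x hx)]
    calc α / Real.sqrt k * Real.sqrt (∑ i, (T.mulVec x i)^2)
        ≤ α / Real.sqrt k * (Real.sqrt k / α * T.mulVec x a) :=
          mul_le_mul_of_nonneg_left (hNle x hx a) (by positivity)
      _ = T.mulVec x a := by
          field_simp
  have hup : ∀ x ∈ posUnit k, ∀ a, matAct T x a ≤ 1 := by
    intro x hx a
    unfold matAct
    simp only [Pi.smul_apply, smul_eq_mul]
    rw [inv_mul_eq_div, div_le_one (hNpos x hx)]
    have hs2 : (T.mulVec x a)^2 ≤ ∑ i, (T.mulVec x i)^2 :=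
      Finset.single_le_sum (f := fun i => T.mulVec x i ^ 2) (fun i _ => sq_nonneg _) (Finset.mem_univ a)
    calc T.mulVec x a = Real.sqrt ((T.mulVec x a)^2) := (Real.sqrt_sq (hmul x hx a).le).symm
      _ ≤ _ := Real.sqrt_le_sqrt hs2
  refine ⟨hlow, ?_⟩
  intro x hx y hy
  have hαk : 0 < α / Real.sqrt k := div_pos hα0 hk0
  set u := matAct T x with hu
  set w := matAct T y with hw
  have hpu : ∀ i, 0 < u i := fun i => lt_of_lt_of_le hαk (hlow x hx i)
  have hpw : ∀ i, 0 < w i := fun i => lt_of_lt_of_le hαk (hlow y hy i)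
  have hsupb : ∀ (p q : Fin k → ℝ), (∀ i, p i ≤ 1) → (∀ i, α/Real.sqrt k ≤ q i) →
      (⨆ i, p i / q i) ≤ Real.sqrt k / α := by
    intro p q hp hq
    apply ciSup_le
    intro i
    have h := div_le_div₀ zero_le_one (hp i) hαk (hq i)
    rwa [one_div_div] at h
  have hsupp : ∀ (p q : Fin k → ℝ), (∀ i, 0 < p i) → (∀ i, 0 < q i) →
      0 < ⨆ i, p i / q i := by
    intro p q hp hq
    obtain ⟨i0⟩ := (inferInstance : Nonempty (Fin k))
    calc (0:ℝ) < p i0 / q i0 := div_pos (hp i0) (hq i0)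
      _ ≤ ⨆ i, p i / q i := le_ciSup (f := fun i => p i / q i) (Set.Finite.bddAbove (Set.finite_range _)) i0
  have hs1 : (⨆ i, u i / w i) ≤ Real.sqrt k / α := hsupb u w (hup x hx) (hlow y hy)
  have hs2 : (⨆ i, w i / u i) ≤ Real.sqrt k / α := hsupb w u (hup y hy) (hlow x hx)
  have hp1 : 0 < ⨆ i, u i / w i := hsupp u w hpu hpw
  have hp2 : 0 < ⨆ i, w i / u i := hsupp w u hpw hpu
  have hprod : (⨆ i, u i / w i) * (⨆ i, w i / u i)
      ≤ (Real.sqrt k / α) * (Real.sqrt k / α) :=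
    mul_le_mul hs1 hs2 hp2.le (by positivity)
  unfold hilbertDist
  calc Real.log ((⨆ i, u i / w i) * (⨆ i, w i / u i))
      ≤ Real.log ((Real.sqrt k / α) * (Real.sqrt k / α)) :=
        Real.log_le_log (mul_pos hp1 hp2) hprod
    _ = 2 * Real.log (Real.sqrt k / α) := by
        rw [Real.log_mul (by positivity) (by positivity)]; ring
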